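/- arXiv:0807.1719 — 5 statements merged into one kernel-verified Lean document; each statement's English description precedes it below -/
import Mathlib

section
/- With K = k((u)) and ŌÜ as above, let D(d, n, a) be the ŌÜ-module with basis e_0, ..., e_{d-1}, ŌÜ(e_i) = e_{i+1} for i < d‚ąí1 and ŌÜ(e_{d-1}) = a u^n e_0 (a ‚ąą k*, n ‚Č• 0). If there exist s ‚Č• 0 and m ‚ąą ‚Ą§ with n ‚ąí b^s n' = m(b^d ‚ąí 1) and a = Ōɗ(a'), then D(d, n, a) ‚ČÖ D(d, n', a') as ŌÜ-modules, via e_i ‚Ü¶ u^{b^i m} e'_{i+s} where e'_{j+1} = ŌÜ(e'_j) for j ‚Č• d. -/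
/-- The φ-semilinear operator of the φ-module `D(d, n, a)` over `K = k((u))`,
expressed in coordinates with respect to the basis `e_0, …, e_{d-1}`:
`φ(e_i) = e_{i+1}` for `i < d-1` and `φ(e_{d-1}) = a uⁿ e_0`. -/
noncomputable def Dphi {k : Type*} [Field k]
    (φ : LaurentSeries k →+* LaurentSeries k) (d n : ℕ) (a : k)
    (x : Fin d → LaurentSeries k) : Fin d → LaurentSeries k :=
  fun j =>
    if (j : ℕ) = 0 then
      HahnSeries.single (n : ℤ) a * φ (x ⟨d - 1, by have := j.isLt; omega⟩)
    else
      φ (x ⟨(j : ℕ) - 1, by have := j.isLt; omega⟩)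

/-!
Write `D(c)` for the cyclic φ-module whose Frobenius has the companion matrix `C(c)` with corner
entry `c`, so that `D(d, n, a) = D(a uⁿ)`. The isomorphism is a composite of two kinds of
elementary ones. A diagonal change of basis `eᵢ ↦ u^{bⁱ m} eᵢ` gives `D(c) ≅ D(u^{m (1 - b^d)} c)`.
Sending `eᵢ ↦ e'ᵢ₊₁` (with `e'_d = φ(e'_{d-1}) = c e'_0`) is the matrix `C(c)` itself, and it is
an isomorphism `D(φ c) ≅ D(c)`; iterating, `D(φˢ c) ≅ D(c)`, and
`φˢ (a' u^{n'}) = σˢ(a') u^{bˢ n'}`.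
-/

open Function HahnSeries

section Companion

variable {K : Type*} [Field K] {d : ℕ}

/-- The coordinate form of `eᵢ ↦ eᵢ₊₁` for `i < d - 1` and `e_{d-1} ↦ c e₀`. -/
def companion (c : K) : (Fin d → K) →ₗ[K] (Fin d → K) where
  toFun x j :=
    if (j : ℕ) = 0 then c * x ⟨d - 1, by have := j.isLt; omega⟩
    else x ⟨(j : ℕ) - 1, by have := j.isLt; omega⟩
  map_add' x y := by
    funext j
    by_cases hj : (j : ℕ) = 0 <;> simp [hj, mul_add]
  map_smul' r x := by
    funext j
    by_cases hj : (j : ℕ) = 0 <;> simp [hj, mul_left_comm c r]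

lemma companion_apply_of_eq_zero (c : K) (x : Fin d → K) {j : Fin d} (hj : (j : ℕ) = 0) :
    companion c x j = c * x ⟨d - 1, by have := j.isLt; omega⟩ :=
  if_pos hj

lemma companion_apply_of_ne_zero (c : K) (x : Fin d → K) {j : Fin d} (hj : (j : ℕ) ≠ 0) :
    companion c x j = x ⟨(j : ℕ) - 1, by have := j.isLt; omega⟩ :=
  if_neg hj

lemma companion_injective {c : K} (hc : c ≠ 0) : Injective (companion (d := d) c) := by
  intro x y hxy
  funext i
  by_cases hi : (i : ℕ) = d - 1
  · have h0 := congrFun hxy ⟨0, by omega⟩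
    rw [companion_apply_of_eq_zero c x rfl, companion_apply_of_eq_zero c y rfl] at h0
    rw [show i = ⟨d - 1, by omega⟩ from Fin.ext hi]
    exact mul_left_cancel₀ hc h0
  · have h1 := congrFun hxy ⟨(i : ℕ) + 1, by omega⟩
    rwa [companion_apply_of_ne_zero c x (by simp), companion_apply_of_ne_zero c y (by simp)] at h1

lemma map_companion (φ : K →+* K) (c : K) (x : Fin d → K) :
    (fun i => φ (companion c x i)) = companion (φ c) (fun i => φ (x i)) := by
  funext j
  by_cases hj : (j : ℕ) = 0
  · simp only [companion_apply_of_eq_zero _ _ hj, map_mul]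
  · simp only [companion_apply_of_ne_zero _ _ hj]

def cyclicPhi (φ : K →+* K) (c : K) (x : Fin d → K) : Fin d → K :=
  companion c (fun i => φ (x i))

variable (φ : K →+* K)

lemma semiconj_companion_cyclicPhi (c : K) :
    Semiconj (companion (d := d) c) (cyclicPhi φ (φ c)) (cyclicPhi φ c) := by
  intro x
  simp only [cyclicPhi, map_companion]

lemma exists_semiconj_cyclicPhi_iterate {c : K} (hc : c ≠ 0) (s : ℕ) :
    ∃ F : (Fin d → K) ≃ₗ[K] (Fin d → K), Semiconj F (cyclicPhi φ (φ^[s] c)) (cyclicPhi φ c) := by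
  induction s with
  | zero => exact ⟨LinearEquiv.refl K _, fun _ => rfl⟩
  | succ s ih =>
    obtain ⟨F, hF⟩ := ih
    have hcs : φ^[s] c ≠ 0 := by
      rw [← RingHom.coe_pow]
      exact (map_ne_zero _).mpr hc
    let G := LinearEquiv.ofInjectiveEndo _ (companion_injective (d := d) hcs)
    have hG : Semiconj G (cyclicPhi φ (φ^[s + 1] c)) (cyclicPhi φ (φ^[s] c)) := by
      rw [iterate_succ_apply']
      exact semiconj_companion_cyclicPhi φ _
    exact ⟨G.trans F, hF.comp_left hG⟩

lemma semiconj_mul_cyclicPhi {c c' : K} {μ : Fin d → K}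
    (hμ : μ * companion c 1 = companion c' (fun i => φ (μ i))) :
    Semiconj (μ * ·) (cyclicPhi φ c) (cyclicPhi φ c') := by
  intro x
  funext j
  have hμj := congrFun hμ j
  by_cases hj : (j : ℕ) = 0
  · simp only [Pi.mul_apply, cyclicPhi, companion_apply_of_eq_zero _ _ hj, Pi.one_apply,
      map_mul] at hμj ⊢
    linear_combination φ (x ⟨d - 1, by omega⟩) * hμj
  · simp only [Pi.mul_apply, cyclicPhi, companion_apply_of_ne_zero _ _ hj, Pi.one_apply,
      map_mul] at hμj ⊢
    rw [← hμj, mul_one]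

lemma exists_semiconj_cyclicPhi_of_mul {c c' : K} {μ : Fin d → K} (hμ0 : ∀ i, μ i ≠ 0)
    (hμ : μ * companion c 1 = companion c' (fun i => φ (μ i))) :
    ∃ F : (Fin d → K) ≃ₗ[K] (Fin d → K), Semiconj F (cyclicPhi φ c) (cyclicPhi φ c') := by
  have hinj : Injective (LinearMap.mulLeft K μ) := fun x y hxy =>
    funext fun i => mul_left_cancel₀ (hμ0 i) (congrFun hxy i)
  exact ⟨LinearEquiv.ofInjectiveEndo _ hinj, semiconj_mul_cyclicPhi φ hμ⟩

end Companion

section LaurentSeries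

variable {k : Type*} [Field k] {σ : k ≃+* k} {b : ℤ} {φ : LaurentSeries k →+* LaurentSeries k}

lemma map_single_of_coeff (hb : b ≠ 0)
    (hφ1 : ∀ (f : LaurentSeries k) (m : ℤ), (φ f).coeff (b * m) = σ (f.coeff m))
    (hφ2 : ∀ (f : LaurentSeries k) (m : ℤ), ¬ b ∣ m → (φ f).coeff m = 0) (M : ℤ) (α : k) :
    φ (single M α) = single (b * M) (σ α) := by
  ext z
  by_cases hz : b ∣ z
  · obtain ⟨c, rfl⟩ := hz
    rw [hφ1]
    rcases eq_or_ne c M with rfl | hc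
    · simp
    · rw [coeff_single_of_ne hc, map_zero,
        coeff_single_of_ne (fun h => hc (mul_left_cancel₀ hb h))]
  · rw [hφ2 _ _ hz, coeff_single_of_ne (by rintro rfl; exact hz ⟨M, rfl⟩)]

variable (hφ : ∀ (M : ℤ) (α : k), φ (single M α) = single (b * M) (σ α))
include hφ

lemma iterate_map_single (s : ℕ) (M : ℤ) (α : k) :
    φ^[s] (single M α) = single (b ^ s * M) (σ^[s] α) := by
  induction s with
  | zero => simp
  | succ s ih => rw [iterate_succ_apply', ih, hφ, iterate_succ_apply', pow_succ', mul_assoc]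

/-- The gauge `eᵢ ↦ u^{bⁱ m} eᵢ`. -/
lemma exists_semiconj_cyclicPhi_single {d : ℕ} {N N' m : ℤ} (hN : N + m = N' + b ^ d * m)
    (α : k) :
    ∃ F : (Fin d → LaurentSeries k) ≃ₗ[LaurentSeries k] (Fin d → LaurentSeries k),
      Semiconj F (cyclicPhi φ (single N α)) (cyclicPhi φ (single N' α)) := by
  refine exists_semiconj_cyclicPhi_of_mul φ (μ := fun i => single (b ^ (i : ℕ) * m) 1)
    (fun i => single_ne_zero one_ne_zero) ?_
  funext j
  by_cases hj : (j : ℕ) = 0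
  · simp only [Pi.mul_apply, companion_apply_of_eq_zero _ _ hj, Pi.one_apply, hφ, map_one,
      single_mul_single, mul_one, one_mul, hj, pow_zero]
    rw [← mul_assoc, ← pow_succ', Nat.sub_add_cancel (by omega), add_comm m, hN]
  · simp only [Pi.mul_apply, companion_apply_of_ne_zero _ _ hj, Pi.one_apply, hφ, map_one,
      mul_one]
    rw [← mul_assoc, ← pow_succ', Nat.sub_add_cancel (by omega)]

end LaurentSeries

lemma Dphi_eq_cyclicPhi {k : Type*} [Field k] (φ : LaurentSeries k →+* LaurentSeries k)
    (d n : ℕ) (a : k) : Dphi φ d n a = cyclicPhi φ (single (n : ℤ) a) :=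
  rfl

theorem stmt5_general (k : Type*) [Field k] (σ : k ≃+* k) (b : ℕ) (hb : 1 < b)
    (φ : LaurentSeries k →+* LaurentSeries k)
    (hφ1 : ∀ (f : LaurentSeries k) (m : ℤ), (φ f).coeff ((b : ℤ) * m) = σ (f.coeff m))
    (hφ2 : ∀ (f : LaurentSeries k) (m : ℤ), ¬ ((b : ℤ) ∣ m) → (φ f).coeff m = 0)
    (d : ℕ) (n n' : ℕ) (a a' : k) (ha' : a' ≠ 0)
    (s : ℕ) (m : ℤ)
    (hcong : (n : ℤ) - (b : ℤ) ^ s * (n' : ℤ) = m * ((b : ℤ) ^ d - 1))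
    (haa' : a = (σ ^ s) a') :
    ∃ F : (Fin d → LaurentSeries k) ≃ₗ[LaurentSeries k] (Fin d → LaurentSeries k),
      ∀ x, F (Dphi φ d n a x) = Dphi φ d n' a' (F x) := by
  simp only [Dphi_eq_cyclicPhi]
  have hφ := map_single_of_coeff (by omega) hφ1 hφ2
  obtain ⟨G, hG⟩ := exists_semiconj_cyclicPhi_single hφ (N := n) (m := m)
    (N' := (b : ℤ) ^ s * n') (by linear_combination hcong) a
  obtain ⟨S, hS⟩ := exists_semiconj_cyclicPhi_iterate φ (single_ne_zero ha') s
  rw [iterate_map_single hφ, ← RingAut.coe_pow, ← haa'] at hS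
  exact ⟨G.trans S, hS.comp_left hG⟩

/-- If `n ≡ bˢ n' (mod b^d - 1)` and `a = σˢ(a')`, then `D(d,n,a) ≅ D(d,n',a')`. -/
theorem stmt5 (k : Type*) [Field k] (σ : k ≃+* k) (b : ℕ) (hb : 1 < b)
    (φ : LaurentSeries k →+* LaurentSeries k)
    (hφ1 : ∀ (f : LaurentSeries k) (m : ℤ), (φ f).coeff ((b : ℤ) * m) = σ (f.coeff m))
    (hφ2 : ∀ (f : LaurentSeries k) (m : ℤ), ¬ ((b : ℤ) ∣ m) → (φ f).coeff m = 0)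
    (d : ℕ) (hd : 0 < d) (n n' : ℕ) (a a' : k) (ha : a ≠ 0) (ha' : a' ≠ 0)
    (s : ℕ) (m : ℤ)
    (hcong : (n : ℤ) - (b : ℤ) ^ s * (n' : ℤ) = m * ((b : ℤ) ^ d - 1))
    (haa' : a = (σ ^ s) a') :
    ∃ F : (Fin d → LaurentSeries k) ≃ₗ[LaurentSeries k] (Fin d → LaurentSeries k),
      ∀ x, F (Dphi φ d n a x) = Dphi φ d n' a' (F x) :=
  stmt5_general k σ b hb φ hφ1 hφ2 d n n' a a' ha' s m hcong haa'
end

section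
/- Let Ōɠ= id, d = d' t with t coprime to p, r = n/(b^d ‚ąí 1) = n'/(b^{d'} ‚ąí 1). For each t-th root őĪ of a, the elements f_i(őĪ) = ő£_{s=0}^{t‚ąí1} őĪ^{t‚ąí1‚ąís} u^{‚ąír b^i (b^{s d'} ‚ąí 1)} e_{s d' + i} (0 ‚ȧ i < d') in D(d, n, a) satisfy ŌÜ(f_i(őĪ)) = f_{i+1}(őĪ) for i < d'‚ąí1 and ŌÜ(f_{d'‚ąí1}(őĪ)) = őĪ u^{n'} f_0(őĪ); hence they span a ŌÜ-submodule isomorphic to D(d', n', őĪ). -/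
/-- The element `f_i(α) = Σ_{s=0}^{t-1} α^{t-1-s} u^{-r bⁱ (b^{sd'} - 1)} e_{sd'+i}`
of `D(d,n,a)`, where `r = n/(b^d - 1) = n'/(b^{d'} - 1)`; the exponent
`r bⁱ (b^{sd'} - 1)` equals the integer `n' bⁱ (1 + b^{d'} + ⋯ + b^{(s-1)d'})`. -/
noncomputable def fvec {k : Type*} [Field k] (b d d' t n' : ℕ) (hd : 0 < d)
    (α : k) (i : ℕ) : Fin d → LaurentSeries k :=
  ∑ s ∈ Finset.range t,
    Pi.single (⟨(s * d' + i) % d, Nat.mod_lt _ hd⟩ : Fin d)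
      (HahnSeries.single
        (-((n' : ℤ) * (b : ℤ) ^ i * ∑ j ∈ Finset.range s, (b : ℤ) ^ (j * d')))
        (α ^ (t - 1 - s)))

/-!
The vector `f_i(α)` is a sum of monomials `α^{t-1-s} u^{-e(s,i)} e_{sd'+i}`, `0 ≤ s < t`, and the
operator of `D(d,n,a)` moves `e_j` to `e_{j+1}` while `φ` multiplies exponents by `b`. For
`i + 1 < d'` this sends the `s`-th summand of `f_i` to the `s`-th summand of `f_{i+1}`. For
`i = d' - 1` the index `sd' + d' - 1` moves to `(s+1)d'`, the first index of block `s + 1` of `f_0`,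
and the telescoping `b^{d'} G_s + 1 = G_{s+1}` of `G_s = Σ_{j<s} b^{jd'}` produces the factor
`u^{n'}`; the last summand wraps around through `e_{d-1} ↦ u^n a e_0`, and `n = n' G_t`,
`a = α^t` make it `α u^{n'}` times the first summand of `f_0`. Hence `x ↦ Σ x_i f_i(α)`
intertwines the two operators, and it is injective because coordinate `(t-1)d' + i` of `f_j(α)`
is a nonzero monomial exactly when `j = i`.
-/

open HahnSeries Finset

theorem LaurentSeries.map_single_eq_of_coeff {k : Type*} [Field k]
    {φ : LaurentSeries k →+* LaurentSeries k} {b : ℕ} (hb : b ≠ 0)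
    (hφ1 : ∀ (f : LaurentSeries k) (m : ℤ), (φ f).coeff ((b : ℤ) * m) = f.coeff m)
    (hφ2 : ∀ (f : LaurentSeries k) (m : ℤ), ¬ ((b : ℤ) ∣ m) → (φ f).coeff m = 0)
    (m : ℤ) (c : k) : φ (single m c) = single ((b : ℤ) * m) c := by
  ext j
  by_cases hj : (b : ℤ) ∣ j
  · obtain ⟨j, rfl⟩ := hj
    simp [hφ1, coeff_single, mul_right_inj' (show (b : ℤ) ≠ 0 by exact_mod_cast hb)]
  · rw [hφ2 _ _ hj, coeff_single, if_neg (by rintro rfl; exact hj ⟨m, rfl⟩)]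

section Dphi

variable {k : Type*} [Field k] (φ : LaurentSeries k →+* LaurentSeries k) (d n : ℕ) (a : k)

theorem Dphi_sum {ι : Type*} (S : Finset ι) (f : ι → Fin d → LaurentSeries k) :
    Dphi φ d n a (∑ s ∈ S, f s) = ∑ s ∈ S, Dphi φ d n a (f s) := by
  funext j
  simp only [Dphi, Finset.sum_apply]
  split <;> simp [map_sum, Finset.mul_sum]

theorem Dphi_smul (c : LaurentSeries k) (x : Fin d → LaurentSeries k) :
    Dphi φ d n a (c • x) = φ c • Dphi φ d n a x := by
  funext j
  simp only [Dphi, Pi.smul_apply, smul_eq_mul, map_mul]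
  split <;> ring

theorem Dphi_single {d : ℕ} (hd : 0 < d) (m : ℕ) (v : LaurentSeries k) :
    Dphi φ d n a (Pi.single ⟨m % d, Nat.mod_lt _ hd⟩ v) =
      Pi.single ⟨(m + 1) % d, Nat.mod_lt _ hd⟩
        ((if (m + 1) % d = 0 then single (n : ℤ) a else 1) * φ v) := by
  funext ⟨j, hj⟩
  simp only [Dphi, Pi.single_apply, Fin.ext_iff, ← Nat.mod_add_mod m d 1]
  have hr : m % d < d := Nat.mod_lt m hd
  generalize m % d = r at *
  obtain h | rfl : r + 1 < d ∨ d = r + 1 := by omega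
  · rw [Nat.mod_eq_of_lt h]
    split_ifs <;> first | omega | simp_all
  · rw [Nat.mod_self]
    split_ifs <;> first | omega | simp_all

theorem linearCombination_Dphi {d' n' : ℕ} {α : k} (hd' : 0 < d')
    (v : ℕ → Fin d → LaurentSeries k) (hv : ∀ i, i + 1 < d' → Dphi φ d n a (v i) = v (i + 1))
    (hlast : Dphi φ d n a (v (d' - 1)) = single (n' : ℤ) α • v 0) (x : Fin d' → LaurentSeries k) :
    Fintype.linearCombination (LaurentSeries k) (fun i : Fin d' => v i) (Dphi φ d' n' α x) =
      Dphi φ d n a (Fintype.linearCombination (LaurentSeries k) (fun i : Fin d' => v i) x) := by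
  rw [← Finset.univ_sum_single x, Dphi_sum, map_sum, map_sum, Dphi_sum]
  refine sum_congr rfl fun ⟨i, hi⟩ _ => ?_
  have hmod : (Pi.single ⟨i, hi⟩ (x ⟨i, hi⟩) : Fin d' → LaurentSeries k) =
      Pi.single ⟨i % d', Nat.mod_lt _ hd'⟩ (x ⟨i, hi⟩) := by
    simp [Nat.mod_eq_of_lt hi]
  rw [hmod, Dphi_single φ n' α hd', Fintype.linearCombination_apply_single,
    Fintype.linearCombination_apply_single, Dphi_smul]
  simp only [Nat.mod_eq_of_lt hi]
  obtain h | h : i + 1 < d' ∨ i + 1 = d' := by omega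
  · rw [Nat.mod_eq_of_lt h, if_neg (by omega), one_mul, hv i h]
  · obtain rfl : i = d' - 1 := by omega
    rw [h, Nat.mod_self, if_pos rfl, hlast, mul_comm, mul_smul]

end Dphi

theorem pow_mul_geom_sum_add_one {R : Type*} [Semiring R] (x : R) (d' s : ℕ) :
    x ^ d' * ∑ j ∈ range s, x ^ (j * d') + 1 = ∑ j ∈ range (s + 1), x ^ (j * d') := by
  simp_rw [pow_mul']
  exact geom_sum_succ.symm

theorem natCast_eq_mul_geom_sum {b d' t n n' : ℕ} (hb : 1 < b) (hd' : 0 < d')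
    (hr : (n : ℤ) * ((b : ℤ) ^ d' - 1) = (n' : ℤ) * ((b : ℤ) ^ (d' * t) - 1)) :
    (n : ℤ) = n' * ∑ j ∈ range t, (b : ℤ) ^ (j * d') := by
  have hgeom :
      (∑ j ∈ range t, (b : ℤ) ^ (j * d')) * ((b : ℤ) ^ d' - 1) = (b : ℤ) ^ (d' * t) - 1 := by
    rw [pow_mul]
    simp_rw [pow_mul']
    exact geom_sum_mul _ t
  have hne : (b : ℤ) ^ d' - 1 ≠ 0 :=
    sub_ne_zero.2 (one_lt_pow₀ (by exact_mod_cast hb) hd'.ne').ne'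
  exact mul_right_cancel₀ hne (by rw [hr, mul_assoc, hgeom])

theorem mul_add_lt_mul {d' t s i : ℕ} (hs : s < t) (hi : i < d') : s * d' + i < d' * t := by
  nlinarith

theorem eq_and_eq_of_mul_add_eq_mul_add {d' s s' i j : ℕ} (hi : i < d') (hj : j < d')
    (h : s * d' + i = s' * d' + j) : s = s' ∧ i = j := by
  have hd' : 0 < d' := by omega
  obtain ⟨h1, h2⟩ := (Nat.div_mod_unique hd').2 ⟨(by ring : i + d' * s = s * d' + i), hi⟩
  obtain ⟨h3, h4⟩ := (Nat.div_mod_unique hd').2 ⟨(by ring : j + d' * s' = s' * d' + j), hj⟩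
  rw [h] at h1 h2
  exact ⟨h1.symm.trans h3, h2.symm.trans h4⟩

section CyclicVectors

variable {k : Type*} [Field k] (b d d' t n' : ℕ) (hd : 0 < d) (α : k)

noncomputable def fvecSummand (s i : ℕ) : Fin d → LaurentSeries k :=
  Pi.single ⟨(s * d' + i) % d, Nat.mod_lt _ hd⟩
    (single (-((n' : ℤ) * (b : ℤ) ^ i * ∑ j ∈ range s, (b : ℤ) ^ (j * d'))) (α ^ (t - 1 - s)))

theorem fvec_eq_sum_fvecSummand (i : ℕ) :
    fvec b d d' t n' hd α i = ∑ s ∈ range t, fvecSummand b d d' t n' hd α s i := rfl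

variable {b d d' t n' hd α} (hdt : d = d' * t)
include hdt

theorem fvec_apply_mul_add {s i j : ℕ} (hs : s < t) (hi : i < d') (hj : j < d') :
    fvec b d d' t n' hd α i ⟨s * d' + j, hdt ▸ mul_add_lt_mul hs hj⟩ =
      if i = j then
        single (-((n' : ℤ) * (b : ℤ) ^ i * ∑ l ∈ range s, (b : ℤ) ^ (l * d'))) (α ^ (t - 1 - s))
      else 0 := by
  have hlt := mul_add_lt_mul hs hi
  rw [fvec_eq_sum_fvecSummand, Finset.sum_apply, sum_eq_single s]
  · simp only [fvecSummand, Pi.single_apply, Fin.ext_iff, Nat.mod_eq_of_lt (hdt ▸ hlt)]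
    exact if_congr (by omega) rfl rfl
  · intro s' hs' hne
    have hlt' := mul_add_lt_mul (mem_range.1 hs') hi
    rw [fvecSummand, Pi.single_apply, if_neg]
    simp only [Fin.ext_iff, Nat.mod_eq_of_lt (hdt ▸ hlt')]
    exact fun h => hne (eq_and_eq_of_mul_add_eq_mul_add hj hi h).1.symm
  · exact fun h => absurd (mem_range.2 hs) h

theorem linearCombination_fvec_apply (x : Fin d' → LaurentSeries k) {s : ℕ} (hs : s < t)
    (i : Fin d') :
    Fintype.linearCombination (LaurentSeries k) (fun j : Fin d' => fvec b d d' t n' hd α j) x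
        ⟨s * d' + i, hdt ▸ mul_add_lt_mul hs i.isLt⟩ =
      x i * single (-((n' : ℤ) * (b : ℤ) ^ (i : ℕ) * ∑ l ∈ range s, (b : ℤ) ^ (l * d')))
        (α ^ (t - 1 - s)) := by
  rw [Fintype.linearCombination_apply, Finset.sum_apply, sum_eq_single i]
  · rw [Pi.smul_apply, smul_eq_mul, fvec_apply_mul_add hdt hs i.isLt i.isLt, if_pos rfl]
  · intro j _ hji
    rw [Pi.smul_apply, fvec_apply_mul_add hdt hs j.isLt i.isLt, if_neg (Fin.val_ne_of_ne hji),
      smul_zero]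
  · exact fun h => absurd (mem_univ i) h

theorem injective_linearCombination_fvec (ht : 0 < t) :
    Function.Injective
      (Fintype.linearCombination (LaurentSeries k)
        (fun j : Fin d' => fvec b d d' t n' hd α j)) := by
  intro x y hxy
  funext i
  have h := congrFun hxy ⟨(t - 1) * d' + i, hdt ▸ mul_add_lt_mul (Nat.sub_lt ht one_pos) i.isLt⟩
  rw [linearCombination_fvec_apply hdt x (Nat.sub_lt ht one_pos),
    linearCombination_fvec_apply hdt y (Nat.sub_lt ht one_pos)] at h
  exact mul_right_cancel₀ (single_ne_zero (by simp)) h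

variable {φ : LaurentSeries k →+* LaurentSeries k}
  (hφ : ∀ (m : ℤ) (c : k), φ (single m c) = single ((b : ℤ) * m) c)
include hφ

theorem Dphi_fvecSummand (n : ℕ) (a : k) {s i : ℕ} (hs : s < t) (hi : i + 1 < d') :
    Dphi φ d n a (fvecSummand b d d' t n' hd α s i) = fvecSummand b d d' t n' hd α s (i + 1) := by
  have hlt := mul_add_lt_mul hs hi
  rw [fvecSummand, Dphi_single φ n a hd, hφ, if_neg (by rw [Nat.mod_eq_of_lt (by omega)]; omega),
    one_mul, fvecSummand]
  congr 3
  ring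

theorem Dphi_fvecSummand_of_add_one_eq (n : ℕ) (a : k) {s i : ℕ} (hs : s + 1 < t)
    (hi : i + 1 = d') :
    Dphi φ d n a (fvecSummand b d d' t n' hd α s i) =
      single (n' : ℤ) α • fvecSummand b d d' t n' hd α (s + 1) 0 := by
  subst hi
  have hlt := mul_add_lt_mul hs (Nat.succ_pos i)
  rw [fvecSummand, Dphi_single φ n a hd, hφ,
    if_neg (by rw [Nat.mod_eq_of_lt (by linarith)]; omega), one_mul, fvecSummand,
    ← Pi.single_smul', smul_eq_mul, single_mul_single]
  congr 3
  · ring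
  · rw [← pow_mul_geom_sum_add_one]
    ring
  · rw [← pow_succ', show t - 1 - s = t - 1 - (s + 1) + 1 by omega]

theorem Dphi_fvecSummand_of_add_one_eq_of_add_one_eq {n : ℕ} {a : k} {s i : ℕ} (hs : s + 1 = t)
    (hi : i + 1 = d') (hn : (n : ℤ) = n' * ∑ j ∈ range t, (b : ℤ) ^ (j * d')) (hα : α ^ t = a) :
    Dphi φ d n a (fvecSummand b d d' t n' hd α s i) =
      single (n' : ℤ) α • fvecSummand b d d' t n' hd α 0 0 := by
  subst hs hi hα
  have hwrap : (s * (i + 1) + i + 1) % d = 0 := by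
    rw [hdt, show s * (i + 1) + i + 1 = (i + 1) * (s + 1) by ring, Nat.mod_self]
  rw [fvecSummand, Dphi_single φ n _ hd, hφ, if_pos hwrap, fvecSummand, ← Pi.single_smul',
    smul_eq_mul, single_mul_single, single_mul_single]
  congr 2
  · simp [hwrap]
  · rw [hn, ← pow_mul_geom_sum_add_one, sum_range_zero]
    congr 1
    ring
  · simp [pow_succ']

theorem Dphi_fvec (n : ℕ) (a : k) {i : ℕ} (hi : i + 1 < d') :
    Dphi φ d n a (fvec b d d' t n' hd α i) = fvec b d d' t n' hd α (i + 1) := by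
  rw [fvec_eq_sum_fvecSummand, Dphi_sum, fvec_eq_sum_fvecSummand]
  exact sum_congr rfl fun s hs => Dphi_fvecSummand hdt hφ n a (mem_range.1 hs) hi

theorem Dphi_fvec_of_add_one_eq {n : ℕ} {a : k} (ht : 0 < t) {i : ℕ} (hi : i + 1 = d')
    (hn : (n : ℤ) = n' * ∑ j ∈ range t, (b : ℤ) ^ (j * d')) (hα : α ^ t = a) :
    Dphi φ d n a (fvec b d d' t n' hd α i) = single (n' : ℤ) α • fvec b d d' t n' hd α 0 := by
  obtain ⟨s, rfl⟩ : ∃ s, t = s + 1 := ⟨t - 1, by omega⟩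
  rw [fvec_eq_sum_fvecSummand, Dphi_sum, sum_range_succ, fvec_eq_sum_fvecSummand,
    sum_range_succ', smul_add, smul_sum]
  congr 1
  · exact sum_congr rfl fun s' hs' =>
      Dphi_fvecSummand_of_add_one_eq hdt hφ n a (by simpa using hs') hi
  · exact Dphi_fvecSummand_of_add_one_eq_of_add_one_eq hdt hφ rfl hi hn hα

end CyclicVectors

theorem stmt7_general
    (k : Type*) [Field k] (b : ℕ) (hb : 1 < b)
    (φ : LaurentSeries k →+* LaurentSeries k)
    (hφ1 : ∀ (f : LaurentSeries k) (m : ℤ), (φ f).coeff ((b : ℤ) * m) = f.coeff m)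
    (hφ2 : ∀ (f : LaurentSeries k) (m : ℤ), ¬ ((b : ℤ) ∣ m) → (φ f).coeff m = 0)
    (d d' t : ℕ) (hd' : 0 < d') (ht : 0 < t)
    (hdt : d = d' * t) (hd : 0 < d)
    (n n' : ℕ)
    (hr : (n : ℤ) * ((b : ℤ) ^ d' - 1) = (n' : ℤ) * ((b : ℤ) ^ d - 1))
    (a α : k) (hα : α ^ t = a) :
    (∀ i : ℕ, i + 1 < d' →
        Dphi φ d n a (fvec b d d' t n' hd α i) = fvec b d d' t n' hd α (i + 1)) ∧
    (Dphi φ d n a (fvec b d d' t n' hd α (d' - 1)) =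
        fun j => HahnSeries.single (n' : ℤ) α * fvec b d d' t n' hd α 0 j) ∧
    ∃ F : (Fin d' → LaurentSeries k) →ₗ[LaurentSeries k] (Fin d → LaurentSeries k),
      Function.Injective F ∧
      (∀ i : Fin d', F (Pi.single i 1) = fvec b d d' t n' hd α (i : ℕ)) ∧
      (∀ x, F (Dphi φ d' n' α x) = Dphi φ d n a (F x)) := by
  have hφ := LaurentSeries.map_single_eq_of_coeff (by omega) hφ1 hφ2
  have hn := natCast_eq_mul_geom_sum hb hd' (hdt ▸ hr)
  have hstep : ∀ i : ℕ, i + 1 < d' →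
      Dphi φ d n a (fvec b d d' t n' hd α i) = fvec b d d' t n' hd α (i + 1) :=
    fun _ => Dphi_fvec hdt hφ n a
  have hlast : Dphi φ d n a (fvec b d d' t n' hd α (d' - 1)) =
      single (n' : ℤ) α • fvec b d d' t n' hd α 0 :=
    Dphi_fvec_of_add_one_eq hdt hφ ht (Nat.sub_add_cancel hd') hn hα
  refine ⟨hstep, hlast, Fintype.linearCombination _ (fun i : Fin d' => fvec b d d' t n' hd α i),
    injective_linearCombination_fvec hdt ht, fun i => ?_,
    linearCombination_Dphi φ d n a hd' _ hstep hlast⟩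
  rw [Fintype.linearCombination_apply_single, one_smul]

/-- With `σ = id`, `d = d' t` (`t` coprime to `p`), `n/(b^d-1) = n'/(b^{d'}-1)` and
`α` a `t`-th root of `a`, the elements `f_i(α)` satisfy `φ(f_i(α)) = f_{i+1}(α)` for
`i < d'-1` and `φ(f_{d'-1}(α)) = α u^{n'} f_0(α)`; hence they span a φ-submodule of
`D(d,n,a)` isomorphic to `D(d',n',α)`. -/
theorem stmt7 (p : ℕ) [Fact p.Prime]
    (k : Type*) [Field k] [IsAlgClosed k] [CharP k p] (b : ℕ) (hb : 1 < b)
    (φ : LaurentSeries k →+* LaurentSeries k)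
    (hφ1 : ∀ (f : LaurentSeries k) (m : ℤ), (φ f).coeff ((b : ℤ) * m) = f.coeff m)
    (hφ2 : ∀ (f : LaurentSeries k) (m : ℤ), ¬ ((b : ℤ) ∣ m) → (φ f).coeff m = 0)
    (d d' t : ℕ) (hd' : 0 < d') (ht : 0 < t) (htp : t.Coprime p)
    (hdt : d = d' * t) (hd : 0 < d)
    (n n' : ℕ)
    (hr : (n : ℤ) * ((b : ℤ) ^ d' - 1) = (n' : ℤ) * ((b : ℤ) ^ d - 1))
    (a α : k) (ha : a ≠ 0) (hα : α ^ t = a) :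
    (∀ i : ℕ, i + 1 < d' →
        Dphi φ d n a (fvec b d d' t n' hd α i) = fvec b d d' t n' hd α (i + 1)) ∧
    (Dphi φ d n a (fvec b d d' t n' hd α (d' - 1)) =
        fun j => HahnSeries.single (n' : ℤ) α * fvec b d d' t n' hd α 0 j) ∧
    ∃ F : (Fin d' → LaurentSeries k) →ₗ[LaurentSeries k] (Fin d → LaurentSeries k),
      Function.Injective F ∧
      (∀ i : Fin d', F (Pi.single i 1) = fvec b d d' t n' hd α (i : ℕ)) ∧
      (∀ x, F (Dphi φ d' n' α x) = Dphi φ d n a (F x)) :=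
  stmt7_general k b hb φ hφ1 hφ2 d d' t hd' ht hdt hd n n' hr a α hα
end

section
/- Let G ‚ąą M_d(k[[u]]) with det G of u-adic valuation ő≥, and let N > bő≥/(b‚ąí1) be an integer. If H ‚ąą M_d(k[[u]]) satisfies H ‚Č° G (mod u^N), then there exists P ‚ąą GL_d(k[[u]]) with P G ŌÜ(P)^{‚ąí1} = H, where ŌÜ acts entrywise on matrices over K = k((u)). -/
/-!
Put `Q := X ^ γ • G⁻¹`, i.e. the adjugate of `G` divided by the unit `det G / X ^ γ`, and
`T P := H φ(P) Q / X ^ γ`, that is `P ↦ H φ(P) G⁻¹`. Since `φ` multiplies `X`-adic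
valuations by `b`, `P ≡ P' mod X ^ w` gives `T P ≡ T P' mod X ^ (b w - γ)`, and `b w - γ > w` for
every `w ≥ N - γ` precisely because `N (b - 1) > b γ`. As `T 1 ≡ 1 mod X ^ (N - γ)` (because
`H ≡ G mod X ^ N`), the iterates `T^[n] 1` converge to a fixed point `P ≡ 1 mod X ^ (N - γ)`.
For such a `P` the division by `X ^ γ` in `T P` is exact, so `X ^ γ P = H φ(P) Q`, and multiplying
by `G` on the right gives `P G = H φ(P)`; finally `P ≡ 1 mod X` makes `P` invertible.
-/

open PowerSeries

theorem Nat.add_lt_mul_of_mul_lt_mul_sub_one {b γ N w : ℕ} (hN : b * γ < N * (b - 1))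
    (hw : N - γ ≤ w) : γ + w < b * w := by
  rcases b with _ | b
  · simp at hN
  · have := Nat.mul_le_mul_right b (show N ≤ w + γ by omega)
    simp only [add_tsub_cancel_right] at hN
    nlinarith

namespace PowerSeries

variable {R : Type*} [CommRing R]

noncomputable def divXPow (n : ℕ) : R⟦X⟧ →+ R⟦X⟧ where
  toFun f := mk fun m => coeff (m + n) f
  map_zero' := by ext; simp
  map_add' f g := by ext; simp

@[simp]
theorem coeff_divXPow (n m : ℕ) (f : R⟦X⟧) : coeff m (divXPow n f) = coeff (m + n) f := by
  simp [divXPow]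

@[simp]
theorem divXPow_X_pow_mul (n : ℕ) (f : R⟦X⟧) : divXPow n (X ^ n * f) = f := by
  ext m
  simp [coeff_X_pow_mul]

theorem X_pow_mul_divXPow {n : ℕ} {f : R⟦X⟧} (h : X ^ n ∣ f) : X ^ n * divXPow n f = f := by
  obtain ⟨g, rfl⟩ := h
  rw [divXPow_X_pow_mul]

theorem X_pow_dvd_divXPow {n t : ℕ} {f : R⟦X⟧} (h : X ^ (n + t) ∣ f) : X ^ t ∣ divXPow n f := by
  obtain ⟨g, rfl⟩ := h
  rw [pow_add, mul_assoc, divXPow_X_pow_mul]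
  exact dvd_mul_right _ _

theorem X_pow_dvd_sub_of_le {c : ℕ} {f : ℕ → R⟦X⟧} (hf : ∀ n, X ^ (c + n) ∣ f (n + 1) - f n)
    {m n : ℕ} (hmn : m ≤ n) : X ^ (c + m) ∣ f n - f m := by
  induction n, hmn using Nat.le_induction with
  | base => simp
  | succ n hmn ih =>
    rw [← sub_add_sub_cancel]
    exact dvd_add ((pow_dvd_pow X (by omega)).trans (hf n)) ih

theorem exists_X_pow_dvd_sub_of_X_pow_dvd_succ_sub {c : ℕ} (f : ℕ → R⟦X⟧)
    (hf : ∀ n, X ^ (c + n) ∣ f (n + 1) - f n) : ∃ g, ∀ n, X ^ (c + n) ∣ g - f n := by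
  have hI (n : ℕ) (x : R⟦X⟧) :
      x ∈ ((Ideal.span {(X : R⟦X⟧)}) ^ n • ⊤ : Submodule R⟦X⟧ R⟦X⟧) ↔ X ^ n ∣ x := by
    rw [smul_eq_mul, Ideal.mul_top, Ideal.span_singleton_pow, Ideal.mem_span_singleton]
  obtain ⟨g, hg⟩ := IsPrecomplete.prec' (I := Ideal.span {(X : R⟦X⟧)}) f fun {m n} hmn => by
    rw [SModEq.sub_mem, hI, ← dvd_neg, neg_sub]
    exact (pow_dvd_pow X (by omega)).trans (X_pow_dvd_sub_of_le hf hmn)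
  refine ⟨g, fun n => ?_⟩
  have hlim := (hI _ _).1 (SModEq.sub_mem.1 (hg (c + n)))
  rw [← dvd_neg, neg_sub] at hlim
  rw [← sub_add_sub_cancel _ (f (c + n))]
  exact dvd_add hlim ((pow_dvd_pow X (by omega)).trans (X_pow_dvd_sub_of_le hf (m := n) (by omega)))

theorem eq_zero_of_forall_X_pow_dvd {f : R⟦X⟧} (h : ∀ n, X ^ n ∣ f) : f = 0 := by
  ext m
  exact X_pow_dvd_iff.1 (h (m + 1)) m (by omega)

theorem X_pow_mul_dvd_map_of_X_pow_dvd {F : Type*} [FunLike F R R] [ZeroHomClass F R R]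
    (σ : F) {b : ℕ} {φ : R⟦X⟧ → R⟦X⟧}
    (hφ₁ : ∀ f m, coeff (b * m) (φ f) = σ (coeff m f))
    (hφ₂ : ∀ f m, ¬ b ∣ m → coeff m (φ f) = 0) {n : ℕ} {f : R⟦X⟧} (hf : X ^ n ∣ f) :
    X ^ (b * n) ∣ φ f := by
  rw [X_pow_dvd_iff] at hf ⊢
  intro m hm
  by_cases hbm : b ∣ m
  · obtain ⟨m, rfl⟩ := hbm
    rw [hφ₁, hf m (Nat.lt_of_mul_lt_mul_left hm), map_zero]
  · exact hφ₂ f m hbm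

end PowerSeries

namespace Matrix

variable {α : Type*} [CommSemiring α] {l m n : Type*} [Fintype m]

theorem dvd_mul_apply_of_dvd_left {c : α} {A : Matrix l m α} (hA : ∀ i j, c ∣ A i j)
    (B : Matrix m n α) (i : l) (j : n) : c ∣ (A * B) i j :=
  Finset.dvd_sum fun k _ => (hA i k).mul_right _

theorem dvd_mul_apply_of_dvd_right {c : α} (A : Matrix l m α) {B : Matrix m n α}
    (hB : ∀ i j, c ∣ B i j) (i : l) (j : n) : c ∣ (A * B) i j :=
  Finset.dvd_sum fun k _ => (hB k j).mul_left _

section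

variable {R : Type*} [CommRing R] {ι : Type*} [Fintype ι]

theorem isUnit_of_X_dvd_sub_one [DecidableEq ι] {P : Matrix ι ι R⟦X⟧}
    (hP : ∀ i j, X ∣ (P - 1) i j) : IsUnit P := by
  have hP₀ : P.map constantCoeff = 1 := by
    ext i j
    have := X_dvd_iff.1 (hP i j)
    rw [sub_apply, map_sub, sub_eq_zero] at this
    simpa [one_apply, apply_ite] using this
  rw [isUnit_iff_isUnit_det, isUnit_iff_constantCoeff, RingHom.map_det, RingHom.mapMatrix_apply,
    hP₀, det_one]
  exact isUnit_one

theorem exists_mul_eq_X_pow_smul_one_of_order_det [DecidableEq ι] {k : Type*} [Field k]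
    {G : Matrix ι ι k⟦X⟧} {γ : ℕ} (hγ : G.det.order = γ) :
    ∃ Q : Matrix ι ι k⟦X⟧, G * Q = (X : k⟦X⟧) ^ γ • 1 ∧ Q * G = (X : k⟦X⟧) ^ γ • 1 := by
  have hdet : G.det ≠ 0 := by
    rintro h
    simp [h] at hγ
  obtain ⟨u, hu⟩ := isUnit_divided_by_X_pow_order hdet
  have hG : G.det = u * (X : k⟦X⟧) ^ γ := by
    conv_lhs => rw [← X_pow_order_mul_divXPowOrder (f := G.det)]
    rw [hγ, ENat.toNat_natCast, ← hu, mul_comm]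
  refine ⟨(↑u⁻¹ : k⟦X⟧) • G.adjugate, ?_, ?_⟩
  · rw [Matrix.mul_smul, mul_adjugate, smul_smul, hG, Units.inv_mul_cancel_left]
  · rw [Matrix.smul_mul, adjugate_mul, smul_smul, hG, Units.inv_mul_cancel_left]

theorem exists_isFixedPt_of_X_pow_dvd_sub {m n : Type*}
    {T : Matrix m n R⟦X⟧ → Matrix m n R⟦X⟧} {c : ℕ}
    (hT : ∀ A B w, c ≤ w → (∀ i j, X ^ w ∣ (A - B) i j) → ∀ i j, X ^ (w + 1) ∣ (T A - T B) i j)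
    (A₀ : Matrix m n R⟦X⟧) (h₀ : ∀ i j, X ^ c ∣ (T A₀ - A₀) i j) :
    ∃ P, Function.IsFixedPt T P ∧ ∀ i j, X ^ c ∣ (P - A₀) i j := by
  have hstep (n : ℕ) : ∀ i j, X ^ (c + n) ∣ (T^[n + 1] A₀ - T^[n] A₀) i j := by
    induction n with
    | zero => simpa using h₀
    | succ n ih =>
      have h := hT _ _ _ (Nat.le_add_right c n) ih
      rwa [← Function.iterate_succ_apply' T, ← Function.iterate_succ_apply' T] at h
  choose g hg using fun i j =>
    exists_X_pow_dvd_sub_of_X_pow_dvd_succ_sub (fun n => T^[n] A₀ i j) fun n => hstep n i j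
  have hlim (n : ℕ) (i j) : X ^ (c + n) ∣ (of g - T^[n] A₀) i j := hg i j n
  refine ⟨of g, Matrix.ext fun i j => ?_, hlim 0⟩
  refine sub_eq_zero.1 (eq_zero_of_forall_X_pow_dvd fun n => ?_)
  rw [← sub_add_sub_cancel _ (T^[n + 1] A₀ i j)]
  refine (pow_dvd_pow X (by omega : n ≤ c + n + 1)).trans (dvd_add ?_ ?_)
  · have h := hT _ _ _ (Nat.le_add_right c n) (hlim n) i j
    rwa [← Function.iterate_succ_apply' T] at h
  · exact dvd_sub_comm.1 (hlim (n + 1) i j)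

end

end Matrix

open Matrix

section

variable {R : Type*} [CommRing R] {ι : Type*} [Fintype ι]

section TwistedStep

variable (φ : R⟦X⟧ →+* R⟦X⟧) (γ : ℕ) (H Q : Matrix ι ι R⟦X⟧)

/-- `H φ(P) Q / X ^ γ`, which is `H φ(P) G⁻¹` when `G Q = X ^ γ` and the (truncating) division
is exact. -/
noncomputable def twistedStep (P : Matrix ι ι R⟦X⟧) : Matrix ι ι R⟦X⟧ :=
  (H * P.map φ * Q).map (divXPow γ)

theorem twistedStep_sub (A B : Matrix ι ι R⟦X⟧) :
    twistedStep φ γ H Q A - twistedStep φ γ H Q B = (H * (A - B).map φ * Q).map (divXPow γ) := by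
  ext i j
  simp [twistedStep, Matrix.map_sub, mul_sub, sub_mul]

variable {φ γ H Q}

theorem twistedStep_sub_dvd {b : ℕ} (hφ : ∀ {n : ℕ} {f : R⟦X⟧}, X ^ n ∣ f → X ^ (b * n) ∣ φ f)
    {A B : Matrix ι ι R⟦X⟧} {w t : ℕ} (hAB : ∀ i j, X ^ w ∣ (A - B) i j) (hwt : γ + t ≤ b * w)
    (i j : ι) : X ^ t ∣ (twistedStep φ γ H Q A - twistedStep φ γ H Q B) i j := by
  rw [twistedStep_sub, map_apply]
  refine X_pow_dvd_divXPow ((pow_dvd_pow X hwt).trans ?_)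
  exact dvd_mul_apply_of_dvd_left (dvd_mul_apply_of_dvd_right H (fun i j => hφ (hAB i j))) Q i j

variable [DecidableEq ι]

theorem twistedStep_one_sub_dvd {G : Matrix ι ι R⟦X⟧} (hGQ : G * Q = (X : R⟦X⟧) ^ γ • 1)
    {N t : ℕ} (hHG : ∀ i j, X ^ N ∣ (H - G) i j) (ht : γ + t ≤ N) (i j : ι) :
    X ^ t ∣ (twistedStep φ γ H Q 1 - 1) i j := by
  have hone : (G * Q).map (divXPow γ) = 1 := by
    ext i j
    simp [hGQ]
  have hsub : twistedStep φ γ H Q 1 - 1 = ((H - G) * Q).map (divXPow γ) := by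
    rw [twistedStep, Matrix.map_one φ (map_zero φ) (map_one φ), Matrix.mul_one, Matrix.sub_mul,
      Matrix.map_sub _ (map_sub _), hone]
  rw [hsub, map_apply]
  exact X_pow_dvd_divXPow ((pow_dvd_pow X ht).trans (dvd_mul_apply_of_dvd_left hHG Q i j))

theorem mul_eq_mul_map_of_isFixedPt {G : Matrix ι ι R⟦X⟧} (hQG : Q * G = (X : R⟦X⟧) ^ γ • 1)
    {P : Matrix ι ι R⟦X⟧} (hP : Function.IsFixedPt (twistedStep φ γ H Q) P)
    (hdvd : ∀ i j, X ^ γ ∣ (H * P.map φ * Q) i j) : P * G = H * P.map φ := by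
  have hXP : (X : R⟦X⟧) ^ γ • P = H * P.map φ * Q := by
    conv_lhs => rw [← hP]
    refine Matrix.ext fun i j => ?_
    simp [twistedStep, X_pow_mul_divXPow (hdvd i j)]
  have hX : (X : R⟦X⟧) ^ γ • (P * G) = (X : R⟦X⟧) ^ γ • (H * P.map φ) := by
    rw [← Matrix.smul_mul, hXP, Matrix.mul_assoc, hQG, Matrix.mul_smul, Matrix.mul_one]
  refine Matrix.ext fun i j => ?_
  simpa using congr(divXPow γ ($hX i j))

theorem X_pow_dvd_mul_map_mul {b : ℕ} (hφ : ∀ {n : ℕ} {f : R⟦X⟧}, X ^ n ∣ f → X ^ (b * n) ∣ φ f)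
    {G : Matrix ι ι R⟦X⟧} (hGQ : G * Q = (X : R⟦X⟧) ^ γ • 1) {N c : ℕ}
    (hHG : ∀ i j, X ^ N ∣ (H - G) i j) (hγN : γ ≤ N) (hγc : γ ≤ b * c) {P : Matrix ι ι R⟦X⟧}
    (hP : ∀ i j, X ^ c ∣ (P - 1) i j) (i j : ι) : X ^ γ ∣ (H * P.map φ * Q) i j := by
  have hsplit : H * P.map φ * Q = (H - G) * P.map φ * Q + G * (P - 1).map φ * Q + G * Q := by
    rw [Matrix.map_sub φ (map_sub φ), Matrix.map_one φ (map_zero φ) (map_one φ)]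
    noncomm_ring
  rw [hsplit, Matrix.add_apply, Matrix.add_apply, hGQ, Matrix.smul_apply, smul_eq_mul]
  refine dvd_add (dvd_add ?_ ?_) (dvd_mul_right _ _)
  · exact (pow_dvd_pow X hγN).trans
      (dvd_mul_apply_of_dvd_left (dvd_mul_apply_of_dvd_left hHG _) Q i j)
  · exact (pow_dvd_pow X hγc).trans
      (dvd_mul_apply_of_dvd_left (dvd_mul_apply_of_dvd_right G fun i j => hφ (hP i j)) Q i j)

end TwistedStep

theorem exists_isUnit_mul_eq_mul_map_of_X_pow_dvd_sub [DecidableEq ι] {φ : R⟦X⟧ →+* R⟦X⟧}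
    {b : ℕ} (hφ : ∀ {n : ℕ} {f : R⟦X⟧}, X ^ n ∣ f → X ^ (b * n) ∣ φ f)
    {G H Q : Matrix ι ι R⟦X⟧} {γ N : ℕ} (hGQ : G * Q = (X : R⟦X⟧) ^ γ • 1)
    (hQG : Q * G = (X : R⟦X⟧) ^ γ • 1)
    (hHG : ∀ i j, X ^ N ∣ (H - G) i j) (hN : b * γ < N * (b - 1)) :
    ∃ P : Matrix ι ι R⟦X⟧, IsUnit P ∧ P * G = H * P.map φ := by
  have hcontr (w : ℕ) (hw : N - γ ≤ w) : γ + w < b * w :=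
    Nat.add_lt_mul_of_mul_lt_mul_sub_one hN hw
  have hc := hcontr (N - γ) le_rfl
  have hγN : γ ≤ N := by
    by_contra h
    simp [show N - γ = 0 by omega] at hc
  obtain ⟨P, hfix, hP⟩ := exists_isFixedPt_of_X_pow_dvd_sub (T := twistedStep φ γ H Q) (c := N - γ)
    (fun _ _ w hw hAB => twistedStep_sub_dvd hφ hAB (hcontr w hw)) 1
    (twistedStep_one_sub_dvd hGQ hHG (by omega))
  refine ⟨P, isUnit_of_X_dvd_sub_one fun i j => ?_,
    mul_eq_mul_map_of_isFixedPt hQG hfix (X_pow_dvd_mul_map_mul hφ hGQ hHG hγN (by omega) hP)⟩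
  refine (dvd_pow_self X fun h => ?_).trans (hP i j)
  simp [h] at hc

end

theorem stmt11_general (k : Type*) [Field k] (σ : k ≃+* k) (b : ℕ)
    (φ : PowerSeries k →+* PowerSeries k)
    (hφ1 : ∀ (f : PowerSeries k) (m : ℕ),
      PowerSeries.coeff (R := k) (b * m) (φ f) = σ (PowerSeries.coeff (R := k) m f))
    (hφ2 : ∀ (f : PowerSeries k) (m : ℕ), ¬ (b ∣ m) →
      PowerSeries.coeff (R := k) m (φ f) = 0)
    (d : ℕ) (G H : Matrix (Fin d) (Fin d) (PowerSeries k))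
    (γ : ℕ) (hγ : G.det.order = (γ : ℕ∞))
    (N : ℕ) (hN : N * (b - 1) > b * γ)
    (hcong : ∀ (i j : Fin d) (m : ℕ), m < N →
      PowerSeries.coeff (R := k) m (H i j) = PowerSeries.coeff (R := k) m (G i j)) :
    ∃ P : Matrix (Fin d) (Fin d) (PowerSeries k),
      IsUnit P ∧ P * G = H * P.map φ := by
  obtain ⟨Q, hGQ, hQG⟩ := exists_mul_eq_X_pow_smul_one_of_order_det hγ
  have hHG (i j : Fin d) : X ^ N ∣ (H - G) i j :=
    X_pow_dvd_iff.2 fun m hm => by simp [hcong i j m hm]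
  exact exists_isUnit_mul_eq_mul_map_of_X_pow_dvd_sub
    (X_pow_mul_dvd_map_of_X_pow_dvd σ hφ1 hφ2) hGQ hQG hHG hN

/-- Let `G ∈ M_d(k[[u]])` with `det G` of `u`-adic valuation `γ`, and let
`N > bγ/(b-1)`.  If `H ∈ M_d(k[[u]])` is congruent to `G` modulo `u^N`, then there is
a matrix `P`, invertible over `k[[u]]`, with `P G φ(P)⁻¹ = H` (equivalently
`P G = H φ(P)`), where `φ` acts entrywise. -/
theorem stmt11 (k : Type*) [Field k] (σ : k ≃+* k) (b : ℕ) (hb : 1 < b)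
    (φ : PowerSeries k →+* PowerSeries k)
    (hφ1 : ∀ (f : PowerSeries k) (m : ℕ),
      PowerSeries.coeff (R := k) (b * m) (φ f) = σ (PowerSeries.coeff (R := k) m f))
    (hφ2 : ∀ (f : PowerSeries k) (m : ℕ), ¬ (b ∣ m) →
      PowerSeries.coeff (R := k) m (φ f) = 0)
    (d : ℕ) (G H : Matrix (Fin d) (Fin d) (PowerSeries k))
    (γ : ℕ) (hγ : G.det.order = (γ : ℕ∞))
    (N : ℕ) (hN : N * (b - 1) > b * γ)
    (hcong : ∀ (i j : Fin d) (m : ℕ), m < N →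
      PowerSeries.coeff (R := k) m (H i j) = PowerSeries.coeff (R := k) m (G i j)) :
    ∃ P : Matrix (Fin d) (Fin d) (PowerSeries k),
      IsUnit P ∧ P * G = H * P.map φ :=
  stmt11_general k σ b φ hφ1 hφ2 d G H γ hγ N hN hcong
end

section
/- Let M be a free k[[u]]-module of rank d with a ŌÜ-semilinear map ŌÜ_M whose matrix G in some basis has det of u-adic valuation ő≥. If x ‚ąą M but x ‚ąČ uM, then ŌÜ_M(x) ‚ąČ u^{ő≥+1} M. -/
/-!
Multiplying `G *ᵥ φ(x)` by the adjugate of `G` shows that `u^{γ+1}` divides `det G · φ(x_i)` for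
every `i`. Choosing `i` with `x_i` a unit, `φ(x_i)` is a unit too (its constant coefficient is
`σ` of that of `x_i`), so `det G · φ(x_i)` has order exactly `γ`.
-/

open PowerSeries

namespace Matrix

theorem dvd_det_mul_of_forall_dvd_mulVec {n R : Type*} [Fintype n] [DecidableEq n]
    [CommRing R] {A : Matrix n n R} {v : n → R} {a : R} (h : ∀ i, a ∣ (A *ᵥ v) i) (j : n) :
    a ∣ A.det * v j := by
  have hadj : A.adjugate *ᵥ (A *ᵥ v) = A.det • v := by
    rw [mulVec_mulVec, adjugate_mul, smul_mulVec, one_mulVec]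
  rw [← smul_eq_mul, ← Pi.smul_apply A.det v j, ← hadj]
  exact Finset.dvd_sum fun i _ => dvd_mul_of_dvd_right (h i) _

end Matrix

theorem PowerSeries.X_pow_dvd_iff_le_order {R : Type*} [Semiring R] {n : ℕ} {f : R⟦X⟧} :
    X ^ n ∣ f ↔ (n : ℕ∞) ≤ f.order := by
  rw [order_eq_emultiplicity_X, pow_dvd_iff_le_emultiplicity]

theorem PowerSeries.not_X_pow_succ_dvd_mul {R : Type*} [Semiring R] [NoZeroDivisors R]
    {f g : R⟦X⟧} {γ : ℕ} (hf : f.order = γ) (hg : constantCoeff g ≠ 0) :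
    ¬ X ^ (γ + 1) ∣ f * g := by
  have hg0 : g.order = 0 := by
    by_contra hne
    exact hg (order_ne_zero_iff_constCoeff_eq_zero.mp hne)
  rw [X_pow_dvd_iff_le_order, order_mul, hf, hg0, add_zero, Nat.cast_le]
  omega

theorem stmt12_general (k : Type*) [Field k] (σ : k ≃+* k) (b : ℕ)
    (φ : PowerSeries k →+* PowerSeries k)
    (hφ1 : ∀ (f : PowerSeries k) (m : ℕ),
      PowerSeries.coeff (b * m) (φ f) = σ (PowerSeries.coeff m f))
    (d : ℕ) (G : Matrix (Fin d) (Fin d) (PowerSeries k))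
    (γ : ℕ) (hγ : G.det.order = (γ : ℕ∞))
    (x : Fin d → PowerSeries k)
    (hx : ¬ ∀ i, (PowerSeries.X : PowerSeries k) ∣ x i) :
    ¬ ∀ i, (PowerSeries.X : PowerSeries k) ^ (γ + 1) ∣
        G.mulVec (fun j => φ (x j)) i := by
  intro h
  obtain ⟨i, hi⟩ := not_forall.mp hx
  have hxi : constantCoeff (x i) ≠ 0 := mt X_dvd_iff.mpr hi
  have hφxi : constantCoeff (φ (x i)) ≠ 0 := by
    have hconst := hφ1 (x i) 0
    rw [mul_zero, coeff_zero_eq_constantCoeff_apply, coeff_zero_eq_constantCoeff_apply] at hconst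
    rwa [hconst, map_ne_zero]
  exact not_X_pow_succ_dvd_mul hγ hφxi (G.dvd_det_mul_of_forall_dvd_mulVec h i)

/-- Let `M = k[[u]]^d` be free with φ-semilinear map whose matrix `G` (in the standard
basis) has determinant of `u`-adic valuation `γ`.  If `x ∈ M` but `x ∉ uM`, then
`φ_M(x) ∉ u^{γ+1} M`.  In coordinates, `φ_M(x) = G ⬝ (φ ∘ x)`. -/
theorem stmt12 (k : Type*) [Field k] (σ : k ≃+* k) (b : ℕ) (hb : 1 < b)
    (φ : PowerSeries k →+* PowerSeries k)
    (hφ1 : ∀ (f : PowerSeries k) (m : ℕ),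
      PowerSeries.coeff (b * m) (φ f) = σ (PowerSeries.coeff m f))
    (hφ2 : ∀ (f : PowerSeries k) (m : ℕ), ¬ (b ∣ m) →
      PowerSeries.coeff m (φ f) = 0)
    (d : ℕ) (G : Matrix (Fin d) (Fin d) (PowerSeries k))
    (γ : ℕ) (hγ : G.det.order = (γ : ℕ∞))
    (x : Fin d → PowerSeries k)
    (hx : ¬ ∀ i, (PowerSeries.X : PowerSeries k) ∣ x i) :
    ¬ ∀ i, (PowerSeries.X : PowerSeries k) ^ (γ + 1) ∣
        G.mulVec (fun j => φ (x j)) i :=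
  stmt12_general k σ b φ hφ1 d G γ hγ x hx
end

section
/- For a simple ťtale ŌÜ-module D over K = k((u)) whose matrix G of ŌÜ (in a suitable basis) lies in M_d(F_q[[u]]), let M be the F_q[[u]]-span of the basis and define x_0 = e_1, n_i minimal with ŌÜ(x_i) ‚ąą u^{n_i} M, x_{i+1} = u^{‚ąín_i} ŌÜ(x_i). Then n_i ‚ȧ ő≥ for all i, where ő≥ = v_u(det G), and for any c > ő≥/(b‚ąí1) there exist i < j with x_i ‚Č° x_j (mod u^c M); consequently ŌÜ^{j‚ąíi}(x_i) ‚Č° u^n x_i (mod u^{n+c} M) with n = ő£_{s=i}^{j‚ąí1} b^{j‚ąí1‚ąís} n_s ‚ȧ ő≥(b^{j‚ąíi}‚ąí1)/(b‚ąí1) < c(b^{j‚ąíi}‚ąí1). -/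
/-!
Write `Φ y = G (φ ∘ y)`. Maximality of `n_i` means `x_{i+1}` is not divisible by `u`, so some
coordinate of `x_i`, and hence of `φ ∘ x_i`, is a unit. Multiplying `Φ x_i ∈ u^{n_i} M` by the
adjugate of `G` gives `u^{n_i} ∣ det G · (unit)`, whence `n_i ≤ γ`.

Since `φ u = u^b`, `Φ (u^N y) = u^{bN} Φ y`, and iterating `Φ x_i = u^{n_i} x_{i+1}` gives
`Φ^{j-i} x_i = u^n x_j` with `n = Σ b^{j-1-s} n_s`. As `M / u^c M` is finite, two of the `x_i`
agree modulo `u^c`, and the bounds on `n` are a geometric series estimate from `n_s ≤ γ`.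
-/

open PowerSeries Finset Matrix

theorem PowerSeries.map_X_eq_X_pow {R F : Type*} [Semiring R] [FunLike F R R]
    [RingHomClass F R R] (σ : F) {b : ℕ} (hb : b ≠ 0) (φ : R⟦X⟧ →+* R⟦X⟧)
    (hφ1 : ∀ (f : R⟦X⟧) (m : ℕ), coeff (b * m) (φ f) = σ (coeff m f))
    (hφ2 : ∀ (f : R⟦X⟧) (m : ℕ), ¬ b ∣ m → coeff m (φ f) = 0) :
    φ X = X ^ b := by
  ext m
  rw [coeff_X_pow]
  by_cases hm : b ∣ m
  · obtain ⟨m, rfl⟩ := hm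
    have hmb : b * m = b ↔ m = 1 := mul_eq_left₀ hb
    rw [hφ1, coeff_X]
    split_ifs <;> simp_all
  · rw [hφ2 _ _ hm, if_neg fun h : m = b => hm (h ▸ dvd_rfl)]

theorem Matrix.dvd_det_mul_of_forall_dvd_mulVec_s19 {R ι : Type*} [CommRing R] [Fintype ι]
    [DecidableEq ι] {G : Matrix ι ι R} {v : ι → R} {a : R} (h : ∀ j, a ∣ (G *ᵥ v) j) (l : ι) :
    a ∣ G.det * v l := by
  have hadj : G.det • v = G.adjugate *ᵥ (G *ᵥ v) := by
    rw [mulVec_mulVec, adjugate_mul, smul_mulVec, one_mulVec]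
  rw [← smul_eq_mul, ← Pi.smul_apply, hadj]
  exact Finset.dvd_sum fun j _ => (h j).mul_left _

theorem PowerSeries.le_order_det_of_X_pow_dvd_mulVec {K ι : Type*} [Field K] [Fintype ι]
    [DecidableEq ι] {G : Matrix ι ι K⟦X⟧} {v : ι → K⟦X⟧} {n : ℕ} (h : ∀ j, X ^ n ∣ (G *ᵥ v) j)
    {l : ι} (hl : constantCoeff (v l) ≠ 0) : (n : ℕ∞) ≤ G.det.order := by
  have hdvd := dvd_det_mul_of_forall_dvd_mulVec_s19 h l
  rw [(isUnit_iff_constantCoeff.mpr hl.isUnit).dvd_mul_right] at hdvd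
  rw [order_eq_emultiplicity_X]
  exact pow_dvd_iff_le_emultiplicity.mp hdvd

theorem PowerSeries.exists_constantCoeff_ne_zero_of_not_forall_X_pow_succ_dvd {R ι : Type*}
    [Semiring R] {y : ι → R⟦X⟧} {n : ℕ} (h : ¬ ∀ j, X ^ (n + 1) ∣ X ^ n * y j) :
    ∃ j, constantCoeff (y j) ≠ 0 := by
  contrapose! h
  exact fun j => pow_succ (X : R⟦X⟧) n ▸ mul_dvd_mul_left _ (X_dvd_iff.mpr (h j))

theorem Matrix.mulVec_map_smul {R ι : Type*} [CommRing R] [Fintype ι] (G : Matrix ι ι R)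
    (φ : R →+* R) (a : R) (y : ι → R) :
    G *ᵥ (fun l => φ ((a • y) l)) = φ a • G *ᵥ fun l => φ (y l) := by
  rw [← mulVec_smul]
  congr 1
  ext l
  simp

theorem sum_Ico_succ_top_pow_mul (b : ℕ) (n : ℕ → ℕ) {i j : ℕ} (hij : i ≤ j) :
    ∑ s ∈ Ico i (j + 1), b ^ (j + 1 - 1 - s) * n s =
      b * ∑ s ∈ Ico i j, b ^ (j - 1 - s) * n s + n j := by
  rw [sum_Ico_succ_top hij, mul_sum, Nat.add_sub_cancel, Nat.sub_self, pow_zero, one_mul]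
  congr 1
  refine sum_congr rfl fun s hs => ?_
  rw [← mul_assoc, ← pow_succ']
  congr 2
  grind

theorem sum_Ico_pow_mul_mul_sub_one_le {b γ : ℕ} (hb : 1 ≤ b) {n : ℕ → ℕ} (hn : ∀ s, n s ≤ γ)
    (i j : ℕ) :
    (∑ s ∈ Ico i j, b ^ (j - 1 - s) * n s) * (b - 1) ≤ γ * (b ^ (j - i) - 1) := by
  have hreflect : ∑ s ∈ Ico i j, b ^ (j - 1 - s) = ∑ t ∈ range (j - i), b ^ t := by
    rw [← sum_range_reflect (b ^ ·), sum_Ico_eq_sum_range]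
    exact sum_congr rfl fun t _ => by grind
  calc (∑ s ∈ Ico i j, b ^ (j - 1 - s) * n s) * (b - 1)
      ≤ (∑ s ∈ Ico i j, b ^ (j - 1 - s) * γ) * (b - 1) := by gcongr with s; exact hn s
    _ = γ * ((∑ t ∈ range (j - i), b ^ t) * (b - 1)) := by rw [← Finset.sum_mul, hreflect]; ring
    _ = γ * (b ^ (j - i) - 1) := by rw [geom_sum_mul_of_one_le hb]

theorem iterate_eq_pow_smul_of_map_eq_pow_smul {R M : Type*} [Monoid R] [MulAction R M]
    (t : R) (b : ℕ) (Φ : M → M) (hΦ : ∀ (N : ℕ) (y : M), Φ (t ^ N • y) = t ^ (b * N) • Φ y)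
    (x : ℕ → M) (n : ℕ → ℕ) (hx : ∀ i, Φ (x i) = t ^ n i • x (i + 1)) {i j : ℕ} (hij : i ≤ j) :
    Φ^[j - i] (x i) = t ^ (∑ s ∈ Ico i j, b ^ (j - 1 - s) * n s) • x j := by
  induction j, hij using Nat.le_induction with
  | base => simp
  | succ j hij ih =>
    rw [Nat.sub_add_comm hij, Function.iterate_succ_apply', ih, hΦ, hx, smul_smul, ← pow_add,
      sum_Ico_succ_top_pow_mul b n hij]

theorem PowerSeries.exists_lt_forall_X_pow_dvd_sub {R ι : Type*} [Ring R] [Finite R] [Finite ι]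
    (x : ℕ → ι → R⟦X⟧) (c : ℕ) : ∃ i j, i < j ∧ ∀ l, X ^ c ∣ x i l - x j l := by
  obtain ⟨i, j, hij, heq⟩ := Set.finite_univ.exists_lt_map_eq_of_forall_mem
    (f := fun i l (m : Fin c) => coeff m (x i l)) fun _ => Set.mem_univ _
  refine ⟨i, j, hij, fun l => X_pow_dvd_iff.mpr fun m hm => ?_⟩
  rw [map_sub, sub_eq_zero]
  exact congrFun (congrFun heq l) ⟨m, hm⟩

theorem stmt19_general (Fq : Type*) [Field Fq] [Fintype Fq]
    (σ : Fq ≃+* Fq) (b : ℕ)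
    (φ : PowerSeries Fq →+* PowerSeries Fq)
    (hφ1 : ∀ (f : PowerSeries Fq) (m : ℕ),
      PowerSeries.coeff (b * m) (φ f) = σ (PowerSeries.coeff m f))
    (hφ2 : ∀ (f : PowerSeries Fq) (m : ℕ), ¬ (b ∣ m) →
      PowerSeries.coeff m (φ f) = 0)
    (d : ℕ) (hd : 0 < d) (G : Matrix (Fin d) (Fin d) (PowerSeries Fq))
    (γ : ℕ) (hγ : G.det.order = (γ : ℕ∞))
    (x : ℕ → (Fin d → PowerSeries Fq)) (nseq : ℕ → ℕ)
    (hx0 : x 0 = Pi.single (⟨0, hd⟩ : Fin d) 1)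
    (hmax : ∀ i, ¬ ∀ j, (PowerSeries.X : PowerSeries Fq) ^ (nseq i + 1) ∣
      G.mulVec (fun l => φ (x i l)) j)
    (hrec : ∀ i j, (PowerSeries.X : PowerSeries Fq) ^ (nseq i) * x (i + 1) j =
      G.mulVec (fun l => φ (x i l)) j) :
    (∀ i, nseq i ≤ γ) ∧
    ∀ c : ℕ, c * (b - 1) > γ →
      ∃ i j : ℕ, i < j ∧
        (∀ l, (PowerSeries.X : PowerSeries Fq) ^ c ∣ (x i l - x j l)) ∧
        (∀ l, (PowerSeries.X : PowerSeries Fq) ^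
            ((∑ s ∈ Finset.Ico i j, b ^ (j - 1 - s) * nseq s) + c) ∣
          ((fun y : Fin d → PowerSeries Fq =>
              G.mulVec (fun l' => φ (y l')))^[j - i] (x i) l -
            PowerSeries.X ^ (∑ s ∈ Finset.Ico i j, b ^ (j - 1 - s) * nseq s) *
              x i l)) ∧
        (∑ s ∈ Finset.Ico i j, b ^ (j - 1 - s) * nseq s) * (b - 1) ≤
          γ * (b ^ (j - i) - 1) ∧
        (∑ s ∈ Finset.Ico i j, b ^ (j - 1 - s) * nseq s) <
          c * (b ^ (j - i) - 1) := by
  have hprimitive : ∀ i, ∃ l, constantCoeff (x i l) ≠ 0 := by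
    rintro (_ | i)
    · exact ⟨⟨0, hd⟩, by simp [hx0]⟩
    · exact exists_constantCoeff_ne_zero_of_not_forall_X_pow_succ_dvd (n := nseq i) <| by
        simpa only [← hrec] using hmax i
  have hle : ∀ i, nseq i ≤ γ := fun i => by
    obtain ⟨l, hl⟩ := hprimitive i
    have hφl : constantCoeff (φ (x i l)) ≠ 0 := by
      rw [← coeff_zero_eq_constantCoeff_apply, ← mul_zero b, hφ1]
      simpa using hl
    have := le_order_det_of_X_pow_dvd_mulVec (fun j => Dvd.intro _ (hrec i j)) hφl
    rwa [hγ, Nat.cast_le] at this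
  refine ⟨hle, fun c hc => ?_⟩
  have hb : 1 < b := by
    by_contra! hb
    simp [Nat.sub_eq_zero_of_le hb] at hc
  have hΦ : ∀ (N : ℕ) (y : Fin d → Fq⟦X⟧), G *ᵥ (fun l => φ (((X : Fq⟦X⟧) ^ N • y) l)) =
      (X : Fq⟦X⟧) ^ (b * N) • G *ᵥ fun l => φ (y l) := fun N y => by
    rw [mulVec_map_smul, map_pow, map_X_eq_X_pow σ (by omega) φ hφ1 hφ2, pow_mul]
  obtain ⟨i, j, hij, hcong⟩ := exists_lt_forall_X_pow_dvd_sub x c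
  have hiter := iterate_eq_pow_smul_of_map_eq_pow_smul (X : Fq⟦X⟧) b
    (fun y => G *ᵥ fun l => φ (y l)) hΦ x nseq (fun i => funext fun j => (hrec i j).symm) hij.le
  set n := ∑ s ∈ Ico i j, b ^ (j - 1 - s) * nseq s
  have hbound := sum_Ico_pow_mul_mul_sub_one_le hb.le hle i j
  refine ⟨i, j, hij, hcong, fun l => ?_, hbound, ?_⟩
  · rw [hiter, Pi.smul_apply, smul_eq_mul, ← mul_sub, pow_add]
    exact mul_dvd_mul_left _ (dvd_sub_comm.mp (hcong l))
  · have hpos : 0 < b ^ (j - i) - 1 := Nat.sub_pos_of_lt (Nat.one_lt_pow (by omega) hb)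
    refine Nat.lt_of_mul_lt_mul_right (a := b - 1) ?_
    calc n * (b - 1) ≤ γ * (b ^ (j - i) - 1) := hbound
      _ < c * (b - 1) * (b ^ (j - i) - 1) := Nat.mul_lt_mul_of_pos_right hc hpos
      _ = c * (b ^ (j - i) - 1) * (b - 1) := by ring

/-- Combinatorial core of the eigenvector theorem.  Over a finite field `F_q`, let
`M = F_q[[u]]^d` with semilinear operator `φ_M(x) = G ⬝ (φ ∘ x)`, where
`γ = v_u(det G)`.  Define `x_0 = e_1`, `n_i` the largest integer with
`φ_M(x_i) ∈ u^{n_i} M` and `x_{i+1} = u^{-n_i} φ_M(x_i)`.  Then `n_i ≤ γ` for all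
`i`, and for every `c > γ/(b-1)` there are `i < j` with `x_i ≡ x_j (mod u^c M)`,
whence `φ_M^{j-i}(x_i) ≡ uⁿ x_i (mod u^{n+c} M)` with
`n = Σ_{s=i}^{j-1} b^{j-1-s} n_s ≤ γ (b^{j-i}-1)/(b-1) < c (b^{j-i}-1)`. -/
theorem stmt19 (Fq : Type*) [Field Fq] [Fintype Fq]
    (σ : Fq ≃+* Fq) (b : ℕ) (hb : 1 < b)
    (φ : PowerSeries Fq →+* PowerSeries Fq)
    (hφ1 : ∀ (f : PowerSeries Fq) (m : ℕ),
      PowerSeries.coeff (b * m) (φ f) = σ (PowerSeries.coeff m f))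
    (hφ2 : ∀ (f : PowerSeries Fq) (m : ℕ), ¬ (b ∣ m) →
      PowerSeries.coeff m (φ f) = 0)
    (d : ℕ) (hd : 0 < d) (G : Matrix (Fin d) (Fin d) (PowerSeries Fq))
    (γ : ℕ) (hγ : G.det.order = (γ : ℕ∞))
    (x : ℕ → (Fin d → PowerSeries Fq)) (nseq : ℕ → ℕ)
    (hx0 : x 0 = Pi.single (⟨0, hd⟩ : Fin d) 1)
    (hdiv : ∀ i j, (PowerSeries.X : PowerSeries Fq) ^ (nseq i) ∣
      G.mulVec (fun l => φ (x i l)) j)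
    (hmax : ∀ i, ¬ ∀ j, (PowerSeries.X : PowerSeries Fq) ^ (nseq i + 1) ∣
      G.mulVec (fun l => φ (x i l)) j)
    (hrec : ∀ i j, (PowerSeries.X : PowerSeries Fq) ^ (nseq i) * x (i + 1) j =
      G.mulVec (fun l => φ (x i l)) j) :
    (∀ i, nseq i ≤ γ) ∧
    ∀ c : ℕ, c * (b - 1) > γ →
      ∃ i j : ℕ, i < j ∧
        (∀ l, (PowerSeries.X : PowerSeries Fq) ^ c ∣ (x i l - x j l)) ∧
        (∀ l, (PowerSeries.X : PowerSeries Fq) ^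
            ((∑ s ∈ Finset.Ico i j, b ^ (j - 1 - s) * nseq s) + c) ∣
          ((fun y : Fin d → PowerSeries Fq =>
              G.mulVec (fun l' => φ (y l')))^[j - i] (x i) l -
            PowerSeries.X ^ (∑ s ∈ Finset.Ico i j, b ^ (j - 1 - s) * nseq s) *
              x i l)) ∧
        (∑ s ∈ Finset.Ico i j, b ^ (j - 1 - s) * nseq s) * (b - 1) ≤
          γ * (b ^ (j - i) - 1) ∧
        (∑ s ∈ Finset.Ico i j, b ^ (j - 1 - s) * nseq s) <
          c * (b ^ (j - i) - 1) :=
  stmt19_general Fq σ b φ hφ1 hφ2 d hd G γ hγ x nseq hx0 hmax hrec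
end
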